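/- Let G be an abelian group, N = {1, α, α², α³, α⁴ = 0} the monogenic monoid with α of index 4 and period 1, P = G × N, and ∼ the congruence on P which is equality together with all pairs ((g, αᵏ), (h, αᵏ)) for g, h ∈ G and k ∈ {3, 4}. Then the quotient S = P/∼ is a monoid whose only right ideals form the chain {0} ⊂ α³S ⊂ α²S ⊂ αS ⊂ S. -/
import Mathlib


universe u

/-- The monogenic monoid `N = {1, α, α², α³, α⁴ = 0}` with `α` of index 4 and period 1,
realised as `{0,1,2,3,4}` under truncated addition (written multiplicatively). -/
def Nt : Type := {m : ℕ // m ≤ 4}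

instance : Monoid Nt where
  mul a b := ⟨min (a.1 + b.1) 4, by omega⟩
  one := ⟨0, by omega⟩
  mul_assoc a b c := by
    apply Subtype.ext
    show min (min (a.1 + b.1) 4 + c.1) 4 = min (a.1 + min (b.1 + c.1) 4) 4
    omega
  one_mul a := by
    apply Subtype.ext
    have := a.2
    show min (0 + a.1) 4 = a.1
    omega
  mul_one a := by
    apply Subtype.ext
    have := a.2
    show min (a.1 + 0) 4 = a.1
    omega

/-- The congruence `∼` on `P = G × N`: equality together with all pairs
`((g, αᵏ), (h, αᵏ))` for `k ∈ {3, 4}`. -/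
def fountainCon (G : Type u) [CommGroup G] : Con (G × Nt) where
  r p q := p = q ∨ (p.2 = q.2 ∧ 3 ≤ p.2.1)
  iseqv := by
    refine ⟨fun p => Or.inl rfl, ?_, ?_⟩
    · rintro p q (rfl | ⟨h1, h2⟩)
      · exact Or.inl rfl
      · exact Or.inr ⟨h1.symm, h1 ▸ h2⟩
    · rintro p q r (rfl | ⟨h1, h2⟩) h
      · exact h
      · rcases h with rfl | ⟨h1', _⟩
        · exact Or.inr ⟨h1, h2⟩
        · exact Or.inr ⟨h1.trans h1', h2⟩
  mul' := by
    rintro p q p' q' (rfl | ⟨h1, h2⟩) (rfl | ⟨h1', h2'⟩)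
    · exact Or.inl rfl
    · refine Or.inr ⟨?_, ?_⟩
      · show p.2 * p'.2 = p.2 * q'.2
        rw [h1']
      · show 3 ≤ min (p.2.1 + p'.2.1) 4
        omega
    · refine Or.inr ⟨?_, ?_⟩
      · show p.2 * p'.2 = q.2 * p'.2
        rw [h1]
      · show 3 ≤ min (p.2.1 + p'.2.1) 4
        omega
    · refine Or.inr ⟨?_, ?_⟩
      · show p.2 * p'.2 = q.2 * q'.2
        rw [h1, h1']
      · show 3 ≤ min (p.2.1 + p'.2.1) 4
        omega

/-- The Fountain monoid `S = P/∼`. -/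
abbrev FountainMonoid (G : Type u) [CommGroup G] : Type u := (fountainCon G).Quotient

/-- The element `α` of the Fountain monoid. -/
def fα (G : Type u) [CommGroup G] : FountainMonoid G :=
  (fountainCon G).mk' (1, ⟨1, by omega⟩)

/-- A right ideal of a monoid: a nonempty subset `I` with `IS ⊆ I`. -/
def IsRightIdeal (S : Type*) [Monoid S] (I : Set S) : Prop :=
  I.Nonempty ∧ ∀ a ∈ I, ∀ s : S, a * s ∈ I


namespace FountainAux

variable {G : Type u} [CommGroup G]

/-- The level homomorphism `S → Nt`. -/
def lvl (G : Type u) [CommGroup G] : FountainMonoid G →* Nt :=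
  (fountainCon G).lift (MonoidHom.snd G Nt) (fun p q h => by
    rcases h with rfl | ⟨h1, _⟩
    · rfl
    · exact h1)

lemma lvl_mk (p : G × Nt) : lvl G ((fountainCon G).mk' p) = p.2 := rfl

lemma mk_eq (p q : G × Nt) (h : p = q ∨ (p.2 = q.2 ∧ 3 ≤ p.2.1)) :
    (fountainCon G).mk' p = (fountainCon G).mk' q := by
  exact (Con.eq _).2 h

lemma exists_rep (x : FountainMonoid G) :
    ∃ g : G, x = (fountainCon G).mk' (g, lvl G x) := by
  induction x using Con.induction_on with
  | H p => exact ⟨p.1, rfl⟩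

lemma fα_pow (j : ℕ) : fα G ^ j = (fountainCon G).mk' (1, ⟨min j 4, by omega⟩) := by
  induction j with
  | zero =>
    rw [pow_zero, ← map_one (fountainCon G).mk']
    apply mk_eq
    left
    refine Prod.ext rfl (Subtype.ext ?_)
    show (0 : ℕ) = min 0 4
    omega
  | succ j ih =>
    rw [pow_succ, ih, fα, ← map_mul]
    apply mk_eq
    left
    refine Prod.ext (one_mul _) (Subtype.ext ?_)
    show min (min j 4 + 1) 4 = min (j + 1) 4
    omega

lemma lvl_fα_pow (j : ℕ) : (lvl G (fα G ^ j)).1 = min j 4 := by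
  rw [fα_pow, lvl_mk]

lemma absorb (x y : FountainMonoid G) (h : (lvl G x).1 ≤ (lvl G y).1) :
    ∃ s, x * s = y := by
  obtain ⟨g, hx⟩ := exists_rep x
  obtain ⟨gy, hy⟩ := exists_rep y
  obtain ⟨m, hmx⟩ : ∃ m : Nt, lvl G x = m := ⟨_, rfl⟩
  obtain ⟨n, hny⟩ : ∃ n : Nt, lvl G y = n := ⟨_, rfl⟩
  rw [hmx] at hx h
  rw [hny] at hy h
  subst hx hy
  refine ⟨(fountainCon G).mk' (g⁻¹ * gy,
    ⟨n.1 - m.1, by have := n.2; omega⟩), ?_⟩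
  rw [← map_mul]
  apply mk_eq
  left
  refine Prod.ext (mul_inv_cancel_left g gy) (Subtype.ext ?_)
  have h2 := n.2
  show min (m.1 + (n.1 - m.1)) 4 = n.1
  omega

lemma mem_range_iff (j : ℕ) (hj4 : j ≤ 4) (x : FountainMonoid G) :
    x ∈ Set.range (fun s => fα G ^ j * s) ↔ j ≤ (lvl G x).1 := by
  constructor
  · rintro ⟨s, rfl⟩
    show j ≤ (lvl G (fα G ^ j * s)).1
    rw [map_mul]
    have h1 := lvl_fα_pow (G := G) j
    have h2 := (lvl G s).2
    show j ≤ min ((lvl G (fα G ^ j)).1 + (lvl G s).1) 4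
    omega
  · intro h
    have h4 : j ≤ (lvl G (fα G ^ j)).1 := by rw [lvl_fα_pow]; omega
    have : (lvl G (fα G ^ j)).1 ≤ (lvl G x).1 := by rw [lvl_fα_pow]; omega
    obtain ⟨s, hs⟩ := absorb (fα G ^ j) x this
    exact ⟨s, hs⟩

lemma eq_top_pow (x : FountainMonoid G) (h : 4 ≤ (lvl G x).1) : x = fα G ^ 4 := by
  obtain ⟨g, hx⟩ := exists_rep x
  have h4 := (lvl G x).2
  rw [hx, fα_pow]
  apply mk_eq
  right
  constructor
  · apply Subtype.ext
    show (lvl G x).1 = min 4 4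
    omega
  · show 3 ≤ (lvl G x).1
    omega

end FountainAux

open FountainAux in
/-- The Fountain monoid `S = P/∼` is a monoid in which `α⁴` is a zero and whose only
right ideals form the chain `{0} ⊂ α³S ⊂ α²S ⊂ αS ⊂ S`. -/
theorem fountainMonoid_ideals (G : Type u) [CommGroup G] :
    (∀ s : FountainMonoid G, (fα G) ^ 4 * s = (fα G) ^ 4 ∧ s * (fα G) ^ 4 = (fα G) ^ 4) ∧
    (∀ I : Set (FountainMonoid G), IsRightIdeal (FountainMonoid G) I →
      I = {(fα G) ^ 4} ∨
      I = Set.range (fun s => (fα G) ^ 3 * s) ∨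
      I = Set.range (fun s => (fα G) ^ 2 * s) ∨
      I = Set.range (fun s => (fα G) * s) ∨
      I = Set.univ) ∧
    ({(fα G) ^ 4} : Set (FountainMonoid G)) ⊂ Set.range (fun s => (fα G) ^ 3 * s) ∧
    Set.range (fun s => (fα G) ^ 3 * s) ⊂ Set.range (fun s => (fα G) ^ 2 * s) ∧
    Set.range (fun s => (fα G) ^ 2 * s) ⊂ Set.range (fun s => (fα G) * s) ∧
    Set.range (fun s => (fα G) * s) ⊂ (Set.univ : Set (FountainMonoid G)) := by
  have zero_mul_r : ∀ s : FountainMonoid G, fα G ^ 4 * s = fα G ^ 4 := by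
    intro s
    have h1 : 4 ≤ (lvl G (fα G ^ 4 * s)).1 := by
      have := (mem_range_iff (G := G) 4 (by omega) (fα G ^ 4 * s)).1 ⟨s, rfl⟩
      omega
    exact eq_top_pow _ h1
  have zero_mul_l : ∀ s : FountainMonoid G, s * fα G ^ 4 = fα G ^ 4 := by
    intro s
    apply eq_top_pow
    rw [map_mul]
    have h1 := lvl_fα_pow (G := G) 4
    have h2 := (lvl G s).2
    show 4 ≤ min ((lvl G s).1 + (lvl G (fα G ^ 4)).1) 4
    omega
  refine ⟨fun s => ⟨zero_mul_r s, zero_mul_l s⟩, ?_, ?_, ?_, ?_, ?_⟩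
  · -- classification of right ideals
    rintro I ⟨⟨x0, hx0⟩, hcl⟩
    set T : Set ℕ := {n | ∃ x ∈ I, (lvl G x).1 = n} with hT
    have hTne : T.Nonempty := ⟨(lvl G x0).1, x0, hx0, rfl⟩
    obtain ⟨x, hxI, hxk⟩ := Nat.sInf_mem hTne
    set k := sInf T with hk
    have hmin : ∀ y ∈ I, k ≤ (lvl G y).1 := fun y hy => Nat.sInf_le ⟨y, hy, rfl⟩
    have hk4 : k ≤ 4 := by
      have := (lvl G x).2
      omega
    have hIeq : I = {y | k ≤ (lvl G y).1} := by
      apply Set.eq_of_subset_of_subset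
      · exact fun y hy => hmin y hy
      · intro y hy
        obtain ⟨s, hs⟩ := absorb x y (by rw [hxk]; exact hy)
        exact hs ▸ hcl x hxI s
    interval_cases k
    · right; right; right; right
      rw [hIeq]
      ext y
      simp
    · right; right; right; left
      rw [hIeq]
      ext y
      rw [Set.mem_setOf_eq, ← mem_range_iff 1 (by omega) y]
      simp [pow_one]
    · right; right; left
      rw [hIeq]
      ext y
      rw [Set.mem_setOf_eq, ← mem_range_iff 2 (by omega) y]
    · right; left
      rw [hIeq]
      ext y
      rw [Set.mem_setOf_eq, ← mem_range_iff 3 (by omega) y]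
    · left
      rw [hIeq]
      ext y
      simp only [Set.mem_setOf_eq, Set.mem_singleton_iff]
      constructor
      · exact fun h => eq_top_pow y h
      · rintro rfl
        rw [lvl_fα_pow]
        omega
  · -- {α⁴} ⊂ α³S
    constructor
    · intro y hy
      rw [Set.mem_singleton_iff] at hy
      subst hy
      exact ⟨fα G, by show fα G ^ 3 * fα G = fα G ^ 4; rw [← pow_succ]⟩
    · intro hsub
      have h3 : fα G ^ 3 ∈ Set.range (fun s => fα G ^ 3 * s) := ⟨1, mul_one _⟩
      have := hsub h3
      rw [Set.mem_singleton_iff] at this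
      have h1 := congrArg (fun z => (lvl G z).1) this
      simp only [lvl_fα_pow] at h1
      omega
  · -- α³S ⊂ α²S
    constructor
    · rintro y ⟨s, rfl⟩
      show fα G ^ 3 * s ∈ Set.range (fun t => fα G ^ 2 * t)
      rw [mem_range_iff 2 (by omega)]
      have := (mem_range_iff (G := G) 3 (by omega) (fα G ^ 3 * s)).1 ⟨s, rfl⟩
      omega
    · intro hsub
      have h2 : fα G ^ 2 ∈ Set.range (fun s => fα G ^ 2 * s) := ⟨1, mul_one _⟩
      have := (mem_range_iff (G := G) 3 (by omega) _).1 (hsub h2)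
      rw [lvl_fα_pow] at this
      omega
  · -- α²S ⊂ αS
    constructor
    · rintro y ⟨s, rfl⟩
      show fα G ^ 2 * s ∈ Set.range (fun t => fα G * t)
      have h1 := (mem_range_iff (G := G) 2 (by omega) (fα G ^ 2 * s)).1 ⟨s, rfl⟩
      have h2 := (mem_range_iff (G := G) 1 (by omega) (fα G ^ 2 * s)).2 (by omega)
      obtain ⟨t, ht⟩ := h2
      exact ⟨t, by simpa [pow_one] using ht⟩
    · intro hsub
      have h1 : fα G ∈ Set.range (fun s => fα G * s) := ⟨1, mul_one _⟩
      have h2 := (mem_range_iff (G := G) 2 (by omega) (fα G)).1 (hsub h1)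
      have hl : (lvl G (fα G)).1 = 1 := by
        have := lvl_fα_pow (G := G) 1
        simpa [pow_one] using this
      omega
  · -- αS ⊂ S
    rw [Set.ssubset_iff_of_subset (Set.subset_univ _)]
    refine ⟨1, Set.mem_univ _, ?_⟩
    intro h1
    have h1' : (1 : FountainMonoid G) ∈ Set.range (fun s => fα G ^ 1 * s) := by
      simpa [pow_one] using h1
    have := (mem_range_iff (G := G) 1 (by omega) 1).1 h1'
    rw [map_one] at this
    have : (1 : ℕ) ≤ 0 := this
    omega
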